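/- Let (X_n)_{n≥0} be a polarization-type process with limit X_∞. Then for any fixed β ∈ (0, 1/2), lim_{n→∞} P(X_n ≤ 2^{−2^{β·n}}) = P(X_∞ = 0). -/

import Mathlib

/-!
Along a path with `X n ∈ (0, 1)`, put `M n = -log₂ X n`. A squaring step doubles `M`, any
other step lowers it by at most `log₂ q`. If `X n → 0` then `M n → ∞`, and by the strong law of
large numbers about half of the steps are squarings. Once `M` exceeds a large constant `K`,
every squaring adds at least `K`, so `M` grows superlinearly. Hence, for small `θ > 0`, at time
`⌊θ n⌋` the value of `M` has outgrown the losses of the remaining steps, and at least `β n`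
squarings are left, so `M n ≥ 2 ^ (β n)`. If instead `X n → X∞ > 0`, the path eventually stays
above the vanishing threshold. So the indicators of `D n(β)` converge almost surely to that of
`{X∞ = 0}`, and the probabilities converge too.
-/

open MeasureTheory ProbabilityTheory Filter Topology

lemma eventually_mul_le_of_tendsto_div {f : ℕ → ℝ} {p a : ℝ}
    (hf : Tendsto (fun n => f n / n) atTop (𝓝 p)) (ha : a < p) :
    ∀ᶠ n : ℕ in atTop, a * n ≤ f n := by
  filter_upwards [hf.eventually (eventually_gt_nhds ha), eventually_gt_atTop 0] with n hn hn0
  exact ((lt_div_iff₀ (by positivity)).1 hn).le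

/-- `M` models `-log₂` of a polarization path: steps with `sq k` double it, the others lower it
by at most `c`. -/
def DoublingWithLoss (sq : ℕ → Prop) (c : ℝ) (M : ℕ → ℝ) : Prop :=
  ∀ k, (sq k → M (k + 1) = 2 * M k) ∧ (¬ sq k → M k - c ≤ M (k + 1))

namespace DoublingWithLoss

variable {sq : ℕ → Prop} [DecidablePred sq] {c : ℝ} {M : ℕ → ℝ}

lemma add_mul_count_sub_le (h : DoublingWithLoss sq c M) (hc : 0 ≤ c) {K : ℝ} {m n : ℕ}
    (hK : ∀ k, m ≤ k → K ≤ M k) (hmn : m ≤ n) :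
    M m + K * (Nat.count sq n - Nat.count sq m) - c * (n - m) ≤ M n := by
  induction n, hmn using Nat.le_induction with
  | base => simp
  | succ n hmn ih =>
    have hKn := hK n hmn
    rw [Nat.count_succ]
    by_cases hn : sq n
    · rw [if_pos hn, (h n).1 hn]
      push_cast
      linarith
    · rw [if_neg hn]
      push_cast
      linarith [(h n).2 hn]

lemma two_pow_count_sub_mul_le (h : DoublingWithLoss sq c M) (hc : 0 ≤ c) {m n : ℕ}
    (hmn : m ≤ n) :
    2 ^ (Nat.count sq n - Nat.count sq m) * (M m - c * (n - m)) ≤ M n := by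
  induction n, hmn using Nat.le_induction with
  | base => simp
  | succ n hmn ih =>
    have hcount : Nat.count sq m ≤ Nat.count sq n := Nat.count_monotone sq hmn
    have hpow : (1 : ℝ) ≤ 2 ^ (Nat.count sq n - Nat.count sq m) := one_le_pow₀ one_le_two
    rw [Nat.count_succ]
    by_cases hn : sq n
    · rw [if_pos hn, (h n).1 hn, Nat.sub_add_comm hcount, pow_succ]
      push_cast
      nlinarith
    · rw [if_neg hn, add_zero]
      push_cast
      nlinarith [(h n).2 hn]

lemma eventually_mul_le (h : DoublingWithLoss sq c M) (hc : 0 ≤ c)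
    (hM : Tendsto M atTop atTop) {p : ℝ}
    (hfreq : Tendsto (fun n => (Nat.count sq n : ℝ) / n) atTop (𝓝 p)) (hp : 0 < p) (L : ℝ) :
    ∀ᶠ n : ℕ in atTop, L * n ≤ M n := by
  set K := (|L| + c + 1) / (p / 2)
  have hK : K * (p / 2) = |L| + c + 1 := div_mul_cancel₀ _ (by positivity)
  have hK0 : 0 ≤ K := by positivity
  obtain ⟨m, hm⟩ := eventually_atTop.1 (hM.eventually_ge_atTop K)
  have hC := tendsto_natCast_atTop_atTop.eventually_ge_atTop
    (K * Nat.count sq m - c * m - M m)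
  filter_upwards [eventually_mul_le_of_tendsto_div hfreq (half_lt_self hp),
    eventually_ge_atTop m, hC] with n hcount hmn hnC
  have hlin := h.add_mul_count_sub_le hc hm hmn
  have hKcount : K * (p / 2 * n) ≤ K * Nat.count sq n := mul_le_mul_of_nonneg_left hcount hK0
  nlinarith [le_abs_self L, (Nat.cast_nonneg n : (0 : ℝ) ≤ n)]

lemma eventually_two_rpow_le (h : DoublingWithLoss sq c M) (hc : 0 ≤ c)
    (hM : Tendsto M atTop atTop) {p β : ℝ}
    (hfreq : Tendsto (fun n => (Nat.count sq n : ℝ) / n) atTop (𝓝 p)) (hβ : 0 ≤ β)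
    (hβp : β < p) :
    ∀ᶠ n : ℕ in atTop, (2 : ℝ) ^ (β * n) ≤ M n := by
  -- The doubling phase starts at `m = ⌊θ n⌋`: by then `M m ≥ L m` exceeds the losses
  -- `c (n - m)` of the remaining steps, among which at least `β n` are squarings.
  set θ := (p - β) / 2
  have hθ : 0 < θ := by simp only [θ]; linarith
  set L := (c + 1) / θ
  have hL : L * θ = c + 1 := div_mul_cancel₀ _ hθ.ne'
  have hfloor : Tendsto (fun n : ℕ => ⌊θ * n⌋₊) atTop atTop :=
    tendsto_nat_floor_atTop.comp (tendsto_natCast_atTop_atTop.const_mul_atTop hθ)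
  have hβθ : β + θ < p := by simp only [θ]; linarith
  filter_upwards [eventually_mul_le_of_tendsto_div hfreq hβθ,
    hfloor.eventually (h.eventually_mul_le hc hM hfreq (by linarith) L),
    tendsto_natCast_atTop_atTop.eventually_ge_atTop (L + 1)] with n hcount hMm hnL
  set m := ⌊θ * n⌋₊
  have hn0 : (0 : ℝ) ≤ n := n.cast_nonneg
  have hm_le : (m : ℝ) ≤ θ * n := Nat.floor_le (by positivity)
  have hm_gt : θ * n - 1 < m := Nat.sub_one_lt_floor _
  have hcount_n : (Nat.count sq n : ℝ) ≤ n := by exact_mod_cast Nat.count_le sq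
  have hcount_m : (Nat.count sq m : ℝ) ≤ m := by exact_mod_cast Nat.count_le sq
  have hmn : m ≤ n := by exact_mod_cast (show (m : ℝ) ≤ n by nlinarith)
  have hcount_mono : Nat.count sq m ≤ Nat.count sq n := Nat.count_monotone sq hmn
  have hstart : 1 ≤ M m - c * (n - m) := by
    have hLm : L * (θ * n - 1) ≤ L * m := mul_le_mul_of_nonneg_left hm_gt.le (by positivity)
    have hLθn : L * (θ * n - 1) = (c + 1) * n - L := by rw [mul_sub, ← mul_assoc, hL, mul_one]
    nlinarith [mul_nonneg hc m.cast_nonneg]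
  have hexp : (2 : ℝ) ^ (β * n) ≤ 2 ^ (Nat.count sq n - Nat.count sq m) := by
    rw [← Real.rpow_natCast, Nat.cast_sub hcount_mono]
    exact Real.rpow_le_rpow_of_exponent_le one_le_two (by nlinarith)
  calc (2 : ℝ) ^ (β * n) ≤ 2 ^ (Nat.count sq n - Nat.count sq m) * 1 := by rwa [mul_one]
    _ ≤ 2 ^ (Nat.count sq n - Nat.count sq m) * (M m - c * (n - m)) := by gcongr
    _ ≤ M n := h.two_pow_count_sub_mul_le hc hmn

end DoublingWithLoss

lemma tendsto_two_rpow_neg_two_rpow_mul {β : ℝ} (hβ : 0 < β) :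
    Tendsto (fun n : ℕ => (2 : ℝ) ^ (-(2 : ℝ) ^ (β * n))) atTop (𝓝 0) :=
  (tendsto_rpow_atBot_of_base_gt_one 2 one_lt_two).comp <| tendsto_neg_atTop_atBot.comp <|
    (tendsto_rpow_atTop_of_base_gt_one 2 one_lt_two).comp <|
      tendsto_natCast_atTop_atTop.const_mul_atTop hβ

def IsPolarizationPath (q : ℝ) (x : ℕ → ℝ) (b : ℕ → ℕ) : Prop :=
  ∀ n, (x n ≠ 0 ∧ x n ≠ 1 →
      (b (n + 1) = 1 → x n ≤ x (n + 1) ∧ x (n + 1) ≤ q * x n) ∧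
      (b (n + 1) = 0 → x (n + 1) = x n ^ 2)) ∧
    ((x n = 0 ∨ x n = 1) → x (n + 1) = x n)

namespace IsPolarizationPath

variable {q : ℝ} {x : ℕ → ℝ} {b : ℕ → ℕ}

lemma eq_of_le (h : IsPolarizationPath q x b) {k n : ℕ} (hk : x k = 0 ∨ x k = 1)
    (hkn : k ≤ n) : x n = x k := by
  induction n, hkn using Nat.le_induction with
  | base => rfl
  | succ n _ ih => rw [(h n).2 (ih ▸ hk), ih]

lemma doublingWithLoss_neg_logb (h : IsPolarizationPath q x b) (hq : 0 < q)
    (hb : ∀ n, b (n + 1) = 0 ∨ b (n + 1) = 1) (hx : ∀ n, x n ∈ Set.Ioo 0 1) :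
    DoublingWithLoss (fun k => b (k + 1) = 0) (Real.logb 2 q)
      (fun n => -Real.logb 2 (x n)) := by
  intro k
  have hk := (h k).1 ⟨(hx k).1.ne', (hx k).2.ne⟩
  refine ⟨fun hsq => ?_, fun hsq => ?_⟩
  · show -Real.logb 2 (x (k + 1)) = 2 * -Real.logb 2 (x k)
    rw [hk.2 hsq, Real.logb_pow]
    ring
  · show -Real.logb 2 (x k) - Real.logb 2 q ≤ -Real.logb 2 (x (k + 1))
    have hle := (hk.1 ((hb k).resolve_left hsq)).2
    have := Real.logb_le_logb_of_le one_lt_two (hx (k + 1)).1 hle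
    rw [Real.logb_mul hq.ne' (hx k).1.ne'] at this
    linarith

lemma eventually_le_of_tendsto_zero (h : IsPolarizationPath q x b) (hq : 1 ≤ q)
    (hx01 : ∀ n, x n ∈ Set.Icc 0 1) (hb : ∀ n, b (n + 1) = 0 ∨ b (n + 1) = 1)
    (hx : Tendsto x atTop (𝓝 0)) {p β : ℝ}
    (hfreq : Tendsto (fun n => (Nat.count (fun k => b (k + 1) = 0) n : ℝ) / n) atTop (𝓝 p))
    (hβ : 0 ≤ β) (hβp : β < p) :
    ∀ᶠ n : ℕ in atTop, x n ≤ (2 : ℝ) ^ (-(2 : ℝ) ^ (β * n)) := by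
  by_cases hzero : ∃ k, x k = 0
  · obtain ⟨k, hk⟩ := hzero
    filter_upwards [eventually_ge_atTop k] with n hkn
    rw [h.eq_of_le (Or.inl hk) hkn, hk]
    positivity
  push Not at hzero
  have hone : ∀ k, x k ≠ 1 := fun k hk => by
    have hx1 : Tendsto x atTop (𝓝 1) := tendsto_const_nhds.congr'
      (eventually_atTop.2 ⟨k, fun n hkn => ((h.eq_of_le (Or.inr hk) hkn).trans hk).symm⟩)
    exact one_ne_zero (tendsto_nhds_unique hx1 hx)
  have hxIoo : ∀ n, x n ∈ Set.Ioo 0 1 := fun n =>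
    ⟨(hx01 n).1.lt_of_ne (hzero n).symm, (hx01 n).2.lt_of_ne (hone n)⟩
  have hM : Tendsto (fun n => -Real.logb 2 (x n)) atTop atTop :=
    tendsto_neg_atBot_atTop.comp ((Real.tendsto_logb_nhdsNE_zero one_lt_two).comp
      (tendsto_nhdsWithin_iff.2 ⟨hx, Eventually.of_forall fun n => (hxIoo n).1.ne'⟩))
  filter_upwards [(h.doublingWithLoss_neg_logb (by linarith) hb hxIoo).eventually_two_rpow_le
    (Real.logb_nonneg one_lt_two hq) hM hfreq hβ hβp] with n hn
  exact (Real.logb_le_iff_le_rpow one_lt_two (hxIoo n).1).1 (by linarith)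

lemma eventually_le_iff_eq_zero (h : IsPolarizationPath q x b) (hq : 1 ≤ q)
    (hx01 : ∀ n, x n ∈ Set.Icc 0 1) (hb : ∀ n, b (n + 1) = 0 ∨ b (n + 1) = 1) {l : ℝ}
    (hx : Tendsto x atTop (𝓝 l)) {p β : ℝ}
    (hfreq : Tendsto (fun n => (Nat.count (fun k => b (k + 1) = 0) n : ℝ) / n) atTop (𝓝 p))
    (hβ : 0 < β) (hβp : β < p) :
    ∀ᶠ n : ℕ in atTop, (x n ≤ (2 : ℝ) ^ (-(2 : ℝ) ^ (β * n)) ↔ l = 0) := by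
  rcases eq_or_ne l 0 with rfl | hl
  · filter_upwards [h.eventually_le_of_tendsto_zero hq hx01 hb hx hfreq hβ.le hβp] with n hn
    simpa using hn
  have hl : 0 < l := (ge_of_tendsto' hx fun n => (hx01 n).1).lt_of_ne hl.symm
  filter_upwards [hx.eventually (eventually_gt_nhds (half_lt_self hl)),
    (tendsto_two_rpow_neg_two_rpow_mul hβ).eventually (eventually_lt_nhds (half_pos hl))]
    with n hxn hthr
  simp only [hl.ne', iff_false, not_le]
  linarith

end IsPolarizationPath

section FairBits

variable {Ω : Type*} [MeasurableSpace Ω] {P : Measure Ω} [IsProbabilityMeasure P]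

lemma ae_eq_zero_or_eq_one_of_fair {f : Ω → ℕ} (hf : Measurable f)
    (h0 : P {ω | f ω = 0} = 1 / 2) (h1 : P {ω | f ω = 1} = 1 / 2) :
    ∀ᵐ ω ∂P, f ω = 0 ∨ f ω = 1 := by
  have hdisj : Disjoint {ω | f ω = 0} {ω | f ω = 1} :=
    Set.disjoint_left.2 fun ω (hω0 : f ω = 0) (hω1 : f ω = 1) =>
      zero_ne_one (hω0.symm.trans hω1)
  rw [ae_iff_measure_eq (measurableSet_setOfPred.2 (by fun_prop)).nullMeasurableSet,
    Set.ofPred_or, measure_union hdisj (hf (measurableSet_singleton 1)), h0, h1, ENNReal.add_halves,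
    measure_univ]

lemma identDistrib_of_fair {f g : Ω → ℕ} (hf : Measurable f) (hg : Measurable g)
    (hf0 : P {ω | f ω = 0} = 1 / 2) (hf1 : P {ω | f ω = 1} = 1 / 2)
    (hg0 : P {ω | g ω = 0} = 1 / 2) (hg1 : P {ω | g ω = 1} = 1 / 2) :
    IdentDistrib f g P P := by
  refine ⟨hf.aemeasurable, hg.aemeasurable, Measure.ext_of_singleton fun a => ?_⟩
  rw [Measure.map_apply hf (measurableSet_singleton a),
    Measure.map_apply hg (measurableSet_singleton a)]
  show P {ω | f ω = a} = P {ω | g ω = a}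
  rcases a with _ | _ | a
  · exact hf0.trans hg0.symm
  · exact hf1.trans hg1.symm
  · have hnull {h : Ω → ℕ} (h01 : ∀ᵐ ω ∂P, h ω = 0 ∨ h ω = 1) :
        P {ω | h ω = a + 2} = 0 :=
      measure_mono_null (fun ω (hω : h ω = a + 2) => by simp only [Set.mem_ofPred_eq]; omega)
        (ae_iff.1 h01)
    rw [hnull (ae_eq_zero_or_eq_one_of_fair hf hf0 hf1),
      hnull (ae_eq_zero_or_eq_one_of_fair hg hg0 hg1)]

lemma ae_tendsto_count_div_of_fair (B : ℕ → Ω → ℕ) (hmeas : ∀ n, Measurable (B n))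
    (hindep : Pairwise fun i j => B i ⟂ᵢ[P] B j)
    (h0 : ∀ n, P {ω | B n ω = 0} = 1 / 2) (h1 : ∀ n, P {ω | B n ω = 1} = 1 / 2) :
    ∀ᵐ ω ∂P,
      Tendsto (fun n => (Nat.count (fun k => B k ω = 0) n : ℝ) / n) atTop (𝓝 (1 / 2)) := by
  set e : ℕ → ℝ := fun k => if k = 0 then 1 else 0
  have he : Measurable e := measurable_of_countable e
  have hY0 : e ∘ B 0 = Set.indicator {ω | B 0 ω = 0} 1 := by
    funext ω
    simp [e, Set.indicator_apply]
  have hset : MeasurableSet {ω | B 0 ω = 0} := hmeas 0 (measurableSet_singleton 0)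
  have hint : Integrable (e ∘ B 0) P := by
    rw [hY0]
    exact (integrable_const 1).indicator hset
  have hmean : P[e ∘ B 0] = 1 / 2 := by
    rw [hY0, integral_indicator_one hset, measureReal_def, h0 0]
    simp
  have hslln := strong_law_ae (fun i => e ∘ B i) hint
    (fun i j hij => (hindep hij).comp he he)
    (fun i => (identDistrib_of_fair (hmeas i) (hmeas 0) (h0 i) (h1 i) (h0 0) (h1 0)).comp he)
  filter_upwards [hslln] with ω hω
  rw [hmean] at hω
  convert hω using 2 with n
  simp [e, Finset.sum_boole, Nat.count_eq_card_filter_range, div_eq_inv_mul]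

end FairBits

theorem polarization_bootstrap_rate_independent_general
    {Ω : Type*} [MeasurableSpace Ω] (P : Measure Ω) [IsProbabilityMeasure P]
    (B : ℕ → Ω → ℕ) (hBmeas : ∀ n, Measurable (B n))
    (hBiid : iIndepFun B P)
    (hB1 : ∀ n, 1 ≤ n → P {ω | B n ω = 1} = 1/2)
    (hB0 : ∀ n, 1 ≤ n → P {ω | B n ω = 0} = 1/2)
    (q : ℝ) (hq : 1 ≤ q)
    (X : ℕ → Ω → ℝ) (hXmeasAmb : ∀ n, Measurable (X n))
    (hX01 : ∀ n ω, X n ω ∈ Set.Icc (0:ℝ) 1)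
    (Xinf : Ω → ℝ) (hXinfmeas : Measurable Xinf)
    (hconv : ∀ᵐ ω ∂P, Tendsto (fun n => X n ω) atTop (nhds (Xinf ω)))
    (hdyn : ∀ n ω, (X n ω ≠ 0 ∧ X n ω ≠ 1 →
        (B (n+1) ω = 1 → X n ω ≤ X (n+1) ω ∧ X (n+1) ω ≤ q * X n ω) ∧
        (B (n+1) ω = 0 → X (n+1) ω = X n ω ^ 2)) ∧
      ((X n ω = 0 ∨ X n ω = 1) → X (n+1) ω = X n ω))
    (β : ℝ) (hβ : β ∈ Set.Ioo (0:ℝ) (1/2)) :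
    Tendsto (fun n => P {ω | X n ω ≤ (2:ℝ) ^ (-(2:ℝ) ^ (β * (n:ℝ)))}) atTop
      (nhds (P {ω | Xinf ω = 0})) := by
  have hbits : ∀ᵐ ω ∂P, ∀ n, B (n + 1) ω = 0 ∨ B (n + 1) ω = 1 := ae_all_iff.2 fun n =>
    ae_eq_zero_or_eq_one_of_fair (hBmeas _) (hB0 _ n.succ_pos) (hB1 _ n.succ_pos)
  have hfreq := ae_tendsto_count_div_of_fair (P := P) (fun n => B (n + 1)) (fun n => hBmeas _)
    (fun i j hij => hBiid.indepFun (by simpa using hij)) (fun n => hB0 _ n.succ_pos)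
    (fun n => hB1 _ n.succ_pos)
  refine tendsto_measure_of_ae_tendsto_indicator_of_isFiniteMeasure atTop
    (hXinfmeas (measurableSet_singleton 0))
    (fun n => measurableSet_le (hXmeasAmb n) measurable_const) ?_
  filter_upwards [hconv, hbits, hfreq] with ω hlim hbitsω hfreqω
  have hpath : IsPolarizationPath q (fun n => X n ω) (fun n => B n ω) := fun n => hdyn n ω
  exact hpath.eventually_le_iff_eq_zero hq (fun n => hX01 n ω) hbitsω hlim hfreqω hβ.1 hβ.2

theorem polarization_bootstrap_rate_independent
    {Ω : Type*} [MeasurableSpace Ω] (P : Measure Ω) [IsProbabilityMeasure P]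
    (B : ℕ → Ω → ℕ) (hBmeas : ∀ n, Measurable (B n))
    (hBiid : iIndepFun B P)
    (hB1 : ∀ n, 1 ≤ n → P {ω | B n ω = 1} = 1/2)
    (hB0 : ∀ n, 1 ≤ n → P {ω | B n ω = 0} = 1/2)
    (q : ℝ) (hq : 1 ≤ q)
    (X : ℕ → Ω → ℝ) (hXmeasAmb : ∀ n, Measurable (X n))
    (hX01 : ∀ n ω, X n ω ∈ Set.Icc (0:ℝ) 1)
    (G : ℕ → MeasurableSpace Ω)
    (hG : ∀ n, G n = (MeasurableSpace.comap (X 0) inferInstance) ⊔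
        ⨆ i ∈ Finset.Icc 1 n, MeasurableSpace.comap (B i) inferInstance)
    (hXmeas : ∀ n, Measurable[G n] (X n))
    (hindep : ∀ n, Indep (MeasurableSpace.comap (B (n+1)) inferInstance) (G n) P)
    (Xinf : Ω → ℝ) (hXinfmeas : Measurable Xinf)
    (hconv : ∀ᵐ ω ∂P, Tendsto (fun n => X n ω) atTop (nhds (Xinf ω)))
    (hdyn : ∀ n ω, (X n ω ≠ 0 ∧ X n ω ≠ 1 →
        (B (n+1) ω = 1 → X n ω ≤ X (n+1) ω ∧ X (n+1) ω ≤ q * X n ω) ∧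
        (B (n+1) ω = 0 → X (n+1) ω = X n ω ^ 2)) ∧
      ((X n ω = 0 ∨ X n ω = 1) → X (n+1) ω = X n ω))
    (β : ℝ) (hβ : β ∈ Set.Ioo (0:ℝ) (1/2)) :
    Tendsto (fun n => P {ω | X n ω ≤ (2:ℝ) ^ (-(2:ℝ) ^ (β * (n:ℝ)))}) atTop
      (nhds (P {ω | Xinf ω = 0})) :=
  polarization_bootstrap_rate_independent_general P B hBmeas hBiid hB1 hB0 q hq X hXmeasAmb hX01
    Xinf hXinfmeas hconv hdyn β hβ
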